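/- arXiv:0901.4378 — 3 statements merged into one kernel-verified Lean document; each statement's English description precedes it below -/
import Mathlib

section
/- Let G be a finite group, k a field of characteristic p, and Ω a finite G-set. Let Q ≤ G be a p-subgroup, let F = Fix_Ω(Q) be the set of points of Ω fixed by Q, and let S = {g ∈ G : g fixes every element of F} be the pointwise stabilizer of F. The normalizer N_G(Q) acts on F, Q acts trivially on F, so the quotient N_G(Q)/Q acts on F. If Q is not a Sylow p-subgroup of S, then the permutation k[N_G(Q)/Q]-module k[F] has no nonzero projective direct summand. -/
namespace Stmt0

/-- The pointwise stabilizer in `G` of the set of `Q`-fixed points of `Ω`. -/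
def ptStab (G : Type*) [Group G] (Ω : Type*) [MulAction G Ω] (Q : Subgroup G) :
    Subgroup G where
  carrier := {g | ∀ ω ∈ MulAction.fixedPoints Q Ω, g • ω = ω}
  one_mem' := by
    intro ω _
    simp
  mul_mem' := by
    intro a b ha hb ω hω
    show (a * b) • ω = ω
    rw [mul_smul, hb ω hω, ha ω hω]
  inv_mem' := by
    intro a ha ω hω
    have h := ha ω hω
    show a⁻¹ • ω = ω
    nth_rewrite 1 [← h]
    rw [inv_smul_smul]

lemma smul_mem_fixedPoints {G : Type*} [Group G] {Ω : Type*} [MulAction G Ω]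
    {Q : Subgroup G} (g : (Subgroup.normalizer (Q : Set G))) {ω : Ω}
    (hω : ω ∈ MulAction.fixedPoints Q Ω) :
    (g : G) • ω ∈ MulAction.fixedPoints Q Ω := by
  intro u
  have hn := Subgroup.mem_normalizer_iff.mp g.2
  have hmem : (g : G)⁻¹ * (u : G) * (g : G) ∈ Q := by
    rw [hn]
    have e : (g : G) * ((g : G)⁻¹ * (u : G) * (g : G)) * (g : G)⁻¹ = (u : G) := by
      group
    rw [e]
    exact u.2
  show (u : G) • ((g : G) • ω) = (g : G) • ω
  have e : (u : G) * (g : G) = (g : G) * ((g : G)⁻¹ * (u : G) * (g : G)) := by group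
  rw [smul_smul, e, ← smul_smul]
  have hfix : ((g : G)⁻¹ * (u : G) * (g : G)) • ω = ω := hω ⟨_, hmem⟩
  rw [hfix]

/-- The permutation action of `N_G(Q)` on the `Q`-fixed points of `Ω`. -/
def normPerm (G : Type*) [Group G] (Ω : Type*) [MulAction G Ω] (Q : Subgroup G) :
    (Subgroup.normalizer (Q : Set G)) →* Equiv.Perm (MulAction.fixedPoints Q Ω) where
  toFun g :=
    { toFun := fun ω => ⟨(g : G) • (ω : Ω), smul_mem_fixedPoints g ω.2⟩
      invFun := fun ω => ⟨((g : G))⁻¹ • (ω : Ω), smul_mem_fixedPoints g⁻¹ ω.2⟩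
      left_inv := fun ω => by
        apply Subtype.ext
        show (g : G)⁻¹ • ((g : G) • (ω : Ω)) = ω
        rw [inv_smul_smul]
      right_inv := fun ω => by
        apply Subtype.ext
        show (g : G) • ((g : G)⁻¹ • (ω : Ω)) = ω
        rw [smul_inv_smul] }
  map_one' := by
    apply Equiv.ext
    intro ω
    apply Subtype.ext
    show ((1 : (Subgroup.normalizer (Q : Set G))) : G) • (ω : Ω) = ω
    simp
  map_mul' a b := by
    apply Equiv.ext
    intro ω
    apply Subtype.ext
    show ((a * b : (Subgroup.normalizer (Q : Set G))) : G) • (ω : Ω) = (a : G) • ((b : G) • (ω : Ω))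
    push_cast
    rw [mul_smul]

lemma subgroupOf_le_ker (G : Type*) [Group G] (Ω : Type*) [MulAction G Ω]
    (Q : Subgroup G) : Q.subgroupOf (Subgroup.normalizer (Q : Set G)) ≤ (normPerm G Ω Q).ker := by
  intro g hg
  rw [MonoidHom.mem_ker]
  apply Equiv.ext
  intro ω
  apply Subtype.ext
  show (g : G) • (ω : Ω) = ω
  exact ω.2 ⟨(g : G), Subgroup.mem_subgroupOf.mp hg⟩

/-- The induced permutation action of `N_G(Q)/Q` on the `Q`-fixed points of `Ω`
(`Q` acts trivially on its fixed points, so the action of `N_G(Q)` descends). -/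
def quotPerm (G : Type*) [Group G] (Ω : Type*) [MulAction G Ω] (Q : Subgroup G) :
    ((Subgroup.normalizer (Q : Set G)) ⧸ Q.subgroupOf (Subgroup.normalizer (Q : Set G))) →*
      Equiv.Perm (MulAction.fixedPoints Q Ω) :=
  QuotientGroup.lift (Q.subgroupOf (Subgroup.normalizer (Q : Set G))) (normPerm G Ω Q)
    (fun g hg => subgroupOf_le_ker G Ω Q hg)

/-- The action of `N_G(Q)/Q` on `Fix_Ω(Q)`, as a `MulAction` instance. -/
instance quotAction (G : Type*) [Group G] (Ω : Type*) [MulAction G Ω] (Q : Subgroup G) :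
    MulAction ((Subgroup.normalizer (Q : Set G)) ⧸ Q.subgroupOf (Subgroup.normalizer (Q : Set G)))
      (MulAction.fixedPoints Q Ω) :=
  MulAction.compHom _ (quotPerm G Ω Q)

/-- `Q` is a Sylow `p`-subgroup of the subgroup `H` (a maximal `p`-subgroup of `H`). -/
def IsSylowOf {G : Type*} [Group G] (p : ℕ) (Q H : Subgroup G) : Prop :=
  Q ≤ H ∧ IsPGroup p Q ∧ ∀ R : Subgroup G, R ≤ H → IsPGroup p R → Q ≤ R → R = Q

/-- The permutation module `k[Ω]` of the `G`-set `Ω` has a nonzero projective direct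
summand. -/
def HasProjSummand (k : Type) [Field k] (G : Type*) [Group G] (Ω : Type*)
    [MulAction G Ω] : Prop :=
  ∃ P W : Submodule (MonoidAlgebra k G) (Representation.ofMulAction k G Ω).asModule,
    IsCompl P W ∧ P ≠ ⊥ ∧ Module.Projective (MonoidAlgebra k G) P

lemma exists_norm_factor {H : Type*} [Group H] {k : Type*} [Field k] {x : H} {pp : ℕ}
    (hpp : 0 < pp) (hord : orderOf x = pp) (b : MonoidAlgebra k H)
    (hb : MonoidAlgebra.of k H x * b = b) :
    ∃ c : MonoidAlgebra k H,
      b = (∑ i ∈ Finset.range pp, MonoidAlgebra.of k H (x ^ i)) * c := by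
  classical
  have hxpp : x ^ pp = 1 := by rw [← hord]; exact pow_orderOf_eq_one x
  have h1 : ∀ h : H, b.coeff (x * h) = b.coeff h := by
    intro h
    have := congrArg (fun f : MonoidAlgebra k H => f.coeff (x * h)) hb
    simp only [MonoidAlgebra.of_apply, MonoidAlgebra.coeff_single_mul_apply, one_mul,
      inv_mul_cancel_left] at this
    exact this.symm
  have hconst : ∀ (n : ℕ) (h : H), b.coeff (x ^ n * h) = b.coeff h := by
    intro n
    induction n with
    | zero => intro h; simp
    | succ n ih =>
      intro h
      rw [pow_succ, mul_assoc, ih, h1]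
  let r : H → H → Prop := fun a b => ∃ n : ℕ, x ^ n * a = b
  have hreq : Equivalence r := by
    constructor
    · exact fun a => ⟨0, by simp⟩
    · rintro a b ⟨n, rfl⟩
      refine ⟨pp * n - n, ?_⟩
      rw [← mul_assoc, ← pow_add]
      have hle : n ≤ pp * n := Nat.le_mul_of_pos_left n hpp
      rw [Nat.sub_add_cancel hle, pow_mul, hxpp, one_pow, one_mul]
    · rintro a b c ⟨n, rfl⟩ ⟨m, rfl⟩
      exact ⟨m + n, by rw [pow_add, mul_assoc]⟩
  let s : Setoid H := ⟨r, hreq⟩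
  let τ : H → H := fun h => (Quotient.mk s h).out
  have hτrel : ∀ h, r (τ h) h := fun h => Quotient.exact (Quotient.out_eq (Quotient.mk s h))
  have hτeq : ∀ a b, r a b → τ a = τ b := by
    intro a b hab
    show (Quotient.mk s a).out = (Quotient.mk s b).out
    congr 1
    exact Quotient.sound hab
  let c : MonoidAlgebra k H := MonoidAlgebra.ofCoeff (b.coeff.filter (fun h => τ h = h))
  refine ⟨c, ?_⟩
  apply MonoidAlgebra.coeff_injective
  ext h
  rw [Finset.sum_mul, MonoidAlgebra.coeff_sum, Finsupp.finset_sum_apply]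
  obtain ⟨n, hn⟩ := hτrel h
  set n0 := n % pp with hn0def
  have hn0lt : n0 < pp := Nat.mod_lt _ hpp
  have hxn0 : x ^ n0 * τ h = h := by
    rw [hn0def, ← hord, pow_mod_orderOf]
    exact hn
  have hτh : τ h = (x ^ n0)⁻¹ * h := by
    rw [eq_inv_mul_iff_mul_eq]
    exact hxn0
  have hττ : τ (τ h) = τ h := hτeq _ _ (hτrel h)
  have key : ∀ i, MonoidAlgebra.single (x ^ i) (1:k) * c = MonoidAlgebra.of k H (x ^ i) * c := by
    intro i; rw [MonoidAlgebra.of_apply]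
  symm
  rw [Finset.sum_eq_single_of_mem n0 (Finset.mem_range.mpr hn0lt)]
  · rw [MonoidAlgebra.of_apply, MonoidAlgebra.coeff_single_mul_apply, one_mul, ← hτh]
    show (MonoidAlgebra.ofCoeff (b.coeff.filter (fun h => τ h = h))).coeff (τ h) = b.coeff h
    rw [MonoidAlgebra.coeff_ofCoeff, Finsupp.filter_apply, if_pos hττ]
    conv_rhs => rw [← hxn0]
    rw [hconst]
  · intro i hi hine
    rw [MonoidAlgebra.of_apply, MonoidAlgebra.coeff_single_mul_apply, one_mul]
    show (MonoidAlgebra.ofCoeff (b.coeff.filter (fun h => τ h = h))).coeff ((x ^ i)⁻¹ * h) = 0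
    have hrel : r ((x ^ i)⁻¹ * h) h := ⟨i, by rw [mul_inv_cancel_left]⟩
    have hτi : τ ((x ^ i)⁻¹ * h) = τ h := hτeq _ _ hrel
    have hne : τ ((x ^ i)⁻¹ * h) ≠ (x ^ i)⁻¹ * h := by
      rw [hτi, hτh]
      intro heq
      have : (x ^ n0)⁻¹ = (x ^ i)⁻¹ := mul_right_cancel heq
      have hpow : x ^ i = x ^ n0 := by
        have := inv_injective this.symm; exact this
      have := pow_inj_mod.mp hpow
      rw [hord, Nat.mod_eq_of_lt (Finset.mem_range.mp hi), Nat.mod_eq_of_lt hn0lt] at this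
      exact hine this
    rw [MonoidAlgebra.coeff_ofCoeff, Finsupp.filter_apply, if_neg hne]



/-- Let `G` be a finite group, `k` a field of characteristic `p`, `Ω` a finite
`G`-set, `Q ≤ G` a `p`-subgroup, `F = Fix_Ω(Q)` and `S` the pointwise stabilizer of
`F` in `G`. If `Q` is not a Sylow `p`-subgroup of `S`, then the permutation
`k[N_G(Q)/Q]`-module `k[F]` has no nonzero projective direct summand. -/
theorem stmt_0 (p : ℕ) (hp : p.Prime) (k : Type) [Field k] [CharP k p]
    (G : Type) [Group G] [Finite G] (Ω : Type) [Finite Ω] [MulAction G Ω]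
    (Q : Subgroup G) (hQ : IsPGroup p Q)
    (hNotSylow : ¬ IsSylowOf p Q (ptStab G Ω Q)) :
    ¬ HasProjSummand k ((Subgroup.normalizer (Q : Set G)) ⧸ Q.subgroupOf (Subgroup.normalizer (Q : Set G)))
        (MulAction.fixedPoints Q Ω) := by
  classical
  haveI := Fact.mk hp
  rintro ⟨P, W, hcompl, hP0, hproj⟩
  have hQle : Q ≤ ptStab G Ω Q := by
    intro q hq ω hω
    exact hω ⟨q, hq⟩
  rw [IsSylowOf] at hNotSylow
  push_neg at hNotSylow
  obtain ⟨R, hRle, hRp, hQR, hRne⟩ := hNotSylow hQle hQ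
  have hnc : NormalizerCondition ↥R := @normalizerCondition_of_isNilpotent _ _ hRp.isNilpotent
  have hlt : Q.subgroupOf R < ⊤ := by
    rw [lt_top_iff_ne_top]
    intro htop
    exact hRne (le_antisymm (Subgroup.subgroupOf_eq_top.mp htop) hQR)
  obtain ⟨y, hyN, hyQ⟩ := SetLike.exists_of_lt (hnc _ hlt)
  have hgR : (y : G) ∈ R := y.2
  have hgQ : (y : G) ∉ Q := fun h => hyQ (Subgroup.mem_subgroupOf.mpr h)
  have hgN : (y : G) ∈ (Subgroup.normalizer (Q : Set G)) := by
    rw [Subgroup.mem_normalizer_iff]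
    intro n
    constructor
    · intro hn
      have hnR : n ∈ R := hQR hn
      have h2 := (Subgroup.mem_normalizer_iff.mp hyN ⟨n, hnR⟩).mp (Subgroup.mem_subgroupOf.mpr hn)
      have h3 := Subgroup.mem_subgroupOf.mp h2
      simpa using h3
    · intro hn
      have h1 : (y : G) * n * (y : G)⁻¹ ∈ R := hQR hn
      have hnR : n ∈ R := by
        have h4 := R.mul_mem (R.mul_mem (R.inv_mem hgR) h1) hgR
        have e : (y : G)⁻¹ * ((y : G) * n * (y : G)⁻¹) * (y : G) = n := by group
        rwa [e] at h4
      have h2 : y * ⟨n, hnR⟩ * y⁻¹ ∈ Q.subgroupOf R := by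
        rw [Subgroup.mem_subgroupOf]
        simpa using hn
      have h3 := (Subgroup.mem_normalizer_iff.mp hyN ⟨n, hnR⟩).mpr h2
      exact Subgroup.mem_subgroupOf.mp h3
  set H' := (Subgroup.normalizer (Q : Set G)) ⧸ Q.subgroupOf (Subgroup.normalizer (Q : Set G)) with hH'
  let gN : (Subgroup.normalizer (Q : Set G)) := ⟨(y : G), hgN⟩
  set x₀ : H' := QuotientGroup.mk gN with hx₀def
  have hx₀ne : x₀ ≠ 1 := by
    intro h
    exact hgQ (Subgroup.mem_subgroupOf.mp ((QuotientGroup.eq_one_iff gN).mp h))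
  obtain ⟨kk, hkk⟩ := hRp ⟨(y : G), hgR⟩
  have hgpow : (y : G) ^ p ^ kk = 1 := by
    have := congrArg (Subtype.val) hkk
    simpa using this
  have hx₀pow : x₀ ^ p ^ kk = 1 := by
    have hg : gN ^ p ^ kk = 1 := by
      apply Subtype.ext
      simpa using hgpow
    rw [hx₀def, ← QuotientGroup.mk_pow, hg]
    rfl
  have hdvd : orderOf x₀ ∣ p ^ kk := orderOf_dvd_of_pow_eq_one hx₀pow
  obtain ⟨j, hjle, hj⟩ := (Nat.dvd_prime_pow hp).mp hdvd
  have hj0 : j ≠ 0 := by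
    rintro rfl
    rw [pow_zero] at hj
    exact hx₀ne (orderOf_eq_one_iff.mp hj)
  set x : H' := x₀ ^ p ^ (j - 1) with hxdef
  have hxord : orderOf x = p := by
    rw [hxdef, orderOf_pow, hj]
    rw [Nat.gcd_eq_right (pow_dvd_pow p (Nat.sub_le j 1))]
    rw [Nat.pow_div (Nat.sub_le j 1) hp.pos]
    have hj1 : j - (j - 1) = 1 := by omega
    rw [hj1, pow_one]
  have hxfix : ∀ ω : MulAction.fixedPoints Q Ω, x • ω = ω := by
    intro ω
    have hmk : x = QuotientGroup.mk (gN ^ p ^ (j - 1)) := by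
      rw [hxdef, hx₀def, QuotientGroup.mk_pow]
    rw [hmk]
    have hmem : ((gN ^ p ^ (j - 1) : (Subgroup.normalizer (Q : Set G))) : G) ∈ ptStab G Ω Q := by
      have hcoe : ((gN ^ p ^ (j - 1) : (Subgroup.normalizer (Q : Set G))) : G) = (y : G) ^ p ^ (j - 1) := by
        push_cast
        rfl
      rw [hcoe]
      exact Subgroup.pow_mem _ (hRle hgR) _
    exact Subtype.ext (hmem ω ω.2)
  -- x acts trivially on the permutation module
  have hMx : ∀ m : (Representation.ofMulAction k H' (MulAction.fixedPoints Q Ω)).asModule,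
      MonoidAlgebra.of k H' x • m = m := by
    intro m
    apply (Representation.ofMulAction k H' (MulAction.fixedPoints Q Ω)).asModuleEquiv.injective
    rw [Representation.asModuleEquiv_map_smul, Representation.asAlgebraHom_of]
    ext ω
    rw [Representation.ofMulAction_apply]
    congr 1
    rw [inv_smul_eq_iff]
    exact (hxfix ω).symm
  have hPx : ∀ m : ↥P, MonoidAlgebra.of k H' x • m = m := by
    intro m
    apply Subtype.ext
    show MonoidAlgebra.of k H' x •
        (m : (Representation.ofMulAction k H' (MulAction.fixedPoints Q Ω)).asModule) = (m : _)
    exact hMx _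
  set NN : MonoidAlgebra k H' := ∑ i ∈ Finset.range p, MonoidAlgebra.of k H' (x ^ i) with hNN
  have hNann : ∀ m : ↥P, NN • m = 0 := by
    intro m
    have hpowfix : ∀ i : ℕ, MonoidAlgebra.of k H' (x ^ i) • m = m := by
      intro i
      induction i with
      | zero => rw [pow_zero, map_one, one_smul]
      | succ i ih => rw [pow_succ, map_mul, mul_smul, hPx, ih]
    rw [hNN, Finset.sum_smul]
    rw [Finset.sum_congr rfl (fun i _ => hpowfix i)]
    rw [Finset.sum_const, Finset.card_range]
    rw [← Nat.cast_smul_eq_nsmul (MonoidAlgebra k H')]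
    have hpB : ((p : ℕ) : MonoidAlgebra k H') = 0 := by
      rw [← map_natCast (algebraMap k (MonoidAlgebra k H')) p, CharP.cast_eq_zero k p, map_zero]
    rw [hpB, zero_smul]
  obtain ⟨s, hs⟩ := Module.projective_def.mp hproj
  obtain ⟨v, hvP, hv0⟩ := (Submodule.ne_bot_iff P).mp hP0
  set m₀ : ↥P := ⟨v, hvP⟩ with hm₀def
  have hm₀ne : m₀ ≠ 0 := by
    intro h
    exact hv0 (congrArg Subtype.val h)
  have hfac : ∀ h : ↥P, ∃ c, s m₀ h = NN * c := by
    intro h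
    have hsm : MonoidAlgebra.of k H' x • s m₀ = s m₀ := by
      rw [← map_smul, hPx]
    have hb : MonoidAlgebra.of k H' x * s m₀ h = s m₀ h := by
      conv_rhs => rw [← hsm]
      rw [Finsupp.smul_apply, smul_eq_mul]
    exact exists_norm_factor hp.pos hxord (s m₀ h) hb
  choose cfun hcfun using hfac
  have hm₀ : m₀ = 0 := by
    have htot := hs m₀
    rw [Finsupp.linearCombination_apply] at htot
    rw [← htot, Finsupp.sum]
    calc ∑ h ∈ (s m₀).support, s m₀ h • id h
        = ∑ h ∈ (s m₀).support, NN • (cfun h • h) := by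
          refine Finset.sum_congr rfl fun h _ => ?_
          rw [hcfun h, mul_smul]
          rfl
      _ = NN • ∑ h ∈ (s m₀).support, cfun h • h := (Finset.smul_sum).symm
      _ = 0 := hNann _
  exact hm₀ne hm₀


end Stmt0
end

section
/- Let α be a finite set partitioned into nonempty subsets α_1, α_2, …, α_t, and for each i let H_i be a subgroup of Sym(α_i) ≤ Sym(α) that fixes no element of α_i. Then the centralizer in Sym(α) of the direct product H_1 × H_2 × ⋯ × H_t equals C_{Sym(α_1)}(H_1) × C_{Sym(α_2)}(H_2) × ⋯ × C_{Sym(α_t)}(H_t). -/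
open Equiv Pointwise

namespace FPS

/-- The support of a permutation of `ℕ`. -/
def psupp (ρ : Equiv.Perm ℕ) : Set ℕ := {ω | ρ ω ≠ ω}

/-- The support of a set of permutations of `ℕ`. -/
def ssupp (X : Set (Equiv.Perm ℕ)) : Set ℕ := ⋃ ρ ∈ X, psupp ρ

/-- `Sym(α)`: the subgroup of permutations of `ℕ` supported on the subset `α`. -/
def symOn (α : Set ℕ) : Subgroup (Equiv.Perm ℕ) where
  carrier := {g | ∀ ω, ω ∉ α → g ω = ω}
  one_mem' := fun _ _ => rfl
  mul_mem' := by
    intro a b ha hb ω hω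
    have hbω := hb ω hω
    have haω := ha ω hω
    show a (b ω) = ω
    rw [hbω, haω]
  inv_mem' := by
    intro a ha ω hω
    have haω := ha ω hω
    show a⁻¹ ω = ω
    nth_rewrite 1 [← haω]
    first | exact Equiv.symm_apply_apply a ω | simp

/-- Membership in the family `𝓕`: finite nonempty sets of finitary permutations,
different from `{1}`. -/
def memF (X : Set (Equiv.Perm ℕ)) : Prop :=
  X.Finite ∧ X.Nonempty ∧ X ≠ {1} ∧ ∀ ρ ∈ X, (psupp ρ).Finite

/-- Membership in `𝓢^q`: members of `𝓕` all of whose elements are products of `q`-cycles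
(each orbit on the support has size `q`) with full support. -/
def memS (q : ℕ) (X : Set (Equiv.Perm ℕ)) : Prop :=
  memF X ∧ (∀ ρ ∈ X, psupp ρ = ssupp X) ∧
    ∀ ρ ∈ X, ∀ ω ∈ psupp ρ, (Set.range fun n : ℤ => (ρ ^ n) ω).ncard = q

/-- Right conjugation `x ↦ x^g = g⁻¹ x g`. -/
def conjR (g x : Equiv.Perm ℕ) : Equiv.Perm ℕ := g⁻¹ * x * g

/-- Conjugate of a set of permutations: `X^g`. -/
def conjSet (g : Equiv.Perm ℕ) (X : Set (Equiv.Perm ℕ)) : Set (Equiv.Perm ℕ) := conjR g '' X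

/-- The setwise stabilizer (under conjugation) of a set of permutations,
as a subgroup of the full group `Sym(ℕ)`. -/
def setStab (X : Set (Equiv.Perm ℕ)) : Subgroup (Equiv.Perm ℕ) where
  carrier := {g | ∀ x, x ∈ X ↔ g⁻¹ * x * g ∈ X}
  one_mem' := by
    intro x
    simp
  mul_mem' := by
    intro a b ha hb x
    have h1 := ha x
    have h2 := hb (a⁻¹ * x * a)
    have e : b⁻¹ * (a⁻¹ * x * a) * b = (a * b)⁻¹ * x * (a * b) := by group
    rw [e] at h2
    exact h1.trans h2
  inv_mem' := by
    intro a ha x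
    have h := ha (a * x * a⁻¹)
    have e : a⁻¹ * (a * x * a⁻¹) * a = x := by group
    rw [e] at h
    have e2 : a * x * a⁻¹ = a⁻¹⁻¹ * x * a⁻¹ := by group
    rw [e2] at h
    exact h.symm

/-- `N_X`: the stabilizer of `X` in `G_X = Sym(supp X)`. -/
def NX (X : Set (Equiv.Perm ℕ)) : Subgroup (Equiv.Perm ℕ) := symOn (ssupp X) ⊓ setStab X

/-- `S_X = C_{G_X}(X)`: the pointwise centralizer of `X` in `G_X = Sym(supp X)`. -/
def SX (X : Set (Equiv.Perm ℕ)) : Subgroup (Equiv.Perm ℕ) :=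
  symOn (ssupp X) ⊓ Subgroup.centralizer X

/-- `Q` is a Sylow `p`-subgroup of the subgroup `H` (that is, a maximal `p`-subgroup of `H`). -/
def IsSylowOf {G : Type*} [Group G] (p : ℕ) (Q H : Subgroup G) : Prop :=
  Q ≤ H ∧ IsPGroup p Q ∧ ∀ R : Subgroup G, R ≤ H → IsPGroup p R → Q ≤ R → R = Q

/-- `Ξ_X = ⋃_{g ∈ G_X} X^g`. -/
def Xi (X : Set (Equiv.Perm ℕ)) : Set (Equiv.Perm ℕ) :=
  ⋃ g ∈ (symOn (ssupp X) : Set (Equiv.Perm ℕ)), conjSet g X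

/-- `X` is closed: `C_{G_X}(Q_X) ∩ Ξ_X = X` for (any) Sylow `p`-subgroup `Q_X` of `S_X`. -/
def IsClosedSet (p : ℕ) (X : Set (Equiv.Perm ℕ)) : Prop :=
  ∀ Q : Subgroup (Equiv.Perm ℕ), IsSylowOf p Q (SX X) →
    (Subgroup.centralizer (Q : Set (Equiv.Perm ℕ)) : Set (Equiv.Perm ℕ)) ∩ Xi X = X

/-- `X` is exact: `supp Q_X = supp X` for (any) Sylow `p`-subgroup `Q_X` of `S_X`. -/
def IsExactSet (p : ℕ) (X : Set (Equiv.Perm ℕ)) : Prop :=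
  ∀ Q : Subgroup (Equiv.Perm ℕ), IsSylowOf p Q (SX X) →
    ssupp (Q : Set (Equiv.Perm ℕ)) = ssupp X

/-- `X` is projective: `Q_X = 1`. -/
def IsProjectiveSet (p : ℕ) (X : Set (Equiv.Perm ℕ)) : Prop :=
  ∀ Q : Subgroup (Equiv.Perm ℕ), IsSylowOf p Q (SX X) → Q = ⊥

/-- `X ∈ 𝓕` is irreducible if it is not a product of two members of `𝓕`
with disjoint supports. -/
def IsIrred (X : Set (Equiv.Perm ℕ)) : Prop :=
  memF X ∧ ∀ Y Z : Set (Equiv.Perm ℕ), memF Y → memF Z →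
    Disjoint (ssupp Y) (ssupp Z) → X ≠ Y * Z

/-- Two sets of permutations are equivalent if they are conjugate in `Sym(ℕ)`. -/
def EquivSet (X Y : Set (Equiv.Perm ℕ)) : Prop := ∃ g : Equiv.Perm ℕ, conjSet g X = Y

/-- `D` is a realization of `Δ^s X`: the diagonal of a product of `s` disjointly
supported conjugates of `X`. -/
def IsDelta (s : ℕ) (X D : Set (Equiv.Perm ℕ)) : Prop :=
  ∃ g : Fin s → Equiv.Perm ℕ,
    (∀ i j, i ≠ j → Disjoint (ssupp (conjSet (g i) X)) (ssupp (conjSet (g j) X))) ∧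
    D = (fun x => (List.ofFn fun i => conjR (g i) x).prod) '' X

/-- `D` is a realization of the `a`-fold `*`-power `X^a`: a product of `a` disjointly
supported conjugates of `X`. -/
def IsStarPow (a : ℕ) (X D : Set (Equiv.Perm ℕ)) : Prop :=
  ∃ g : Fin a → Equiv.Perm ℕ,
    (∀ i j, i ≠ j → Disjoint (ssupp (conjSet (g i) X)) (ssupp (conjSet (g j) X))) ∧
    D = (List.ofFn fun i => conjSet (g i) X).prod

/-- `X` is a transitive set: `⟨X⟩` is transitive on `supp X`. -/
def TransitiveSet (X : Set (Equiv.Perm ℕ)) : Prop :=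
  ∀ a ∈ ssupp X, ∀ b ∈ ssupp X, ∃ g ∈ Subgroup.closure X, g a = b

lemma mem_setStab {X : Set (Equiv.Perm ℕ)} {g : Equiv.Perm ℕ} :
    g ∈ setStab X ↔ ∀ x, x ∈ X ↔ g⁻¹ * x * g ∈ X := Iff.rfl

lemma conjR_mem {X : Set (Equiv.Perm ℕ)} {g : Equiv.Perm ℕ} (hg : g ∈ setStab X)
    {x : Equiv.Perm ℕ} (hx : x ∈ X) : g⁻¹ * x * g ∈ X :=
  (mem_setStab.mp hg x).mp hx

lemma conjL_mem {X : Set (Equiv.Perm ℕ)} {g : Equiv.Perm ℕ} (hg : g ∈ setStab X)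
    {x : Equiv.Perm ℕ} (hx : x ∈ X) : g * x * g⁻¹ ∈ X := by
  have h := mem_setStab.mp ((setStab X).inv_mem hg) x
  rw [inv_inv] at h
  exact h.mp hx

/-- The permutation of `X` induced by conjugation by an element of `N_X`. -/
def conjPerm (X : Set (Equiv.Perm ℕ)) (g : NX X) : Equiv.Perm X where
  toFun x := ⟨(g : Equiv.Perm ℕ) * x * (g : Equiv.Perm ℕ)⁻¹,
    conjL_mem (Subgroup.mem_inf.mp g.2).2 x.2⟩
  invFun x := ⟨(g : Equiv.Perm ℕ)⁻¹ * x * (g : Equiv.Perm ℕ),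
    conjR_mem (Subgroup.mem_inf.mp g.2).2 x.2⟩
  left_inv x := by
    apply Subtype.ext
    show (g : Equiv.Perm ℕ)⁻¹ * ((g : Equiv.Perm ℕ) * x * (g : Equiv.Perm ℕ)⁻¹) *
      (g : Equiv.Perm ℕ) = x
    group
  right_inv x := by
    apply Subtype.ext
    show (g : Equiv.Perm ℕ) * ((g : Equiv.Perm ℕ)⁻¹ * x * (g : Equiv.Perm ℕ)) *
      (g : Equiv.Perm ℕ)⁻¹ = x
    group

/-- The action of `N_X` on `X` by conjugation, as a homomorphism `N_X →* Sym(X)`. -/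
def MXhom (X : Set (Equiv.Perm ℕ)) : NX X →* Equiv.Perm X where
  toFun := conjPerm X
  map_one' := by
    apply Equiv.ext
    intro x
    apply Subtype.ext
    show ((1 : NX X) : Equiv.Perm ℕ) * x * ((1 : NX X) : Equiv.Perm ℕ)⁻¹ = x
    simp
  map_mul' a b := by
    apply Equiv.ext
    intro x
    apply Subtype.ext
    show ((a * b : NX X) : Equiv.Perm ℕ) * x * ((a * b : NX X) : Equiv.Perm ℕ)⁻¹
      = (a : Equiv.Perm ℕ) * ((b : Equiv.Perm ℕ) * x * (b : Equiv.Perm ℕ)⁻¹) *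
        (a : Equiv.Perm ℕ)⁻¹
    push_cast
    group

/-- `M_X = N_X/S_X`, realized as the image of `N_X` in `Sym(X)` (the action of `N_X`
on `X` is by conjugation, with kernel `S_X`). -/
def MX (X : Set (Equiv.Perm ℕ)) : Subgroup (Equiv.Perm X) := (MXhom X).range

/-- The permutation module `k[Ω]` of the `G`-set `Ω` has a nonzero projective direct summand. -/
def HasProjSummand (k : Type) [Field k] (G : Type*) [Group G] (Ω : Type*) [MulAction G Ω] :
    Prop :=
  ∃ P W : Submodule (MonoidAlgebra k G) (Representation.ofMulAction k G Ω).asModule,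
    IsCompl P W ∧ P ≠ ⊥ ∧ Module.Projective (MonoidAlgebra k G) P

/-- `X` is a fixed point set: `X ∈ 𝓢^q`, `X` is closed, and the permutation
`k M_X`-module `k[X]` has a nonzero projective direct summand. -/
def IsFPS (p q : ℕ) (k : Type) [Field k] (X : Set (Equiv.Perm ℕ)) : Prop :=
  memS q X ∧ IsClosedSet p X ∧ HasProjSummand k (MX X) X

/-- `X` and `Y` (with disjoint supports) are coprime: `N_{X*Y} = N_X × N_Y`. -/
def CoprimeSets (X Y : Set (Equiv.Perm ℕ)) : Prop := NX (X * Y) = NX X ⊔ NX Y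

/-- `X` is projective-free: no factor in a decomposition of `X` into irreducibles
is projective. -/
def ProjFree (p : ℕ) (X : Set (Equiv.Perm ℕ)) : Prop :=
  ∀ L : List (Set (Equiv.Perm ℕ)), (∀ Y ∈ L, IsIrred Y) →
    L.Pairwise (fun A B => Disjoint (ssupp A) (ssupp B)) →
    X = L.prod → ∀ Y ∈ L, ¬ IsProjectiveSet p Y


lemma symOn_apply_mem {s : Set ℕ} {g : Equiv.Perm ℕ} (hg : g ∈ symOn s) {ω : ℕ}
    (hω : ω ∈ s) : g ω ∈ s := by
  by_contra h
  have h1 : g (g ω) = g ω := hg _ h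
  exact h (by rw [g.injective h1]; exact hω)

lemma symOn_mono {s u : Set ℕ} (h : s ⊆ u) : symOn s ≤ symOn u :=
  fun g hg ω hω => hg ω fun hs => hω (h hs)

lemma symOn_commute {s u : Set ℕ} (hd : Disjoint s u) {g h : Equiv.Perm ℕ}
    (hg : g ∈ symOn s) (hh : h ∈ symOn u) : Commute g h := by
  have hgu : ∀ ω ∈ u, g ω = ω := fun ω hω => hg ω (fun hs => (hd.le_bot ⟨hs, hω⟩))
  have hhs : ∀ ω ∈ s, h ω = ω := fun ω hω => hh ω (fun hs => (hd.le_bot ⟨hω, hs⟩))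
  apply Equiv.ext
  intro ω
  show g (h ω) = h (g ω)
  by_cases hωs : ω ∈ s
  · rw [hhs ω hωs, hhs _ (symOn_apply_mem hg hωs)]
  by_cases hωu : ω ∈ u
  · rw [hgu ω hωu, hgu _ (symOn_apply_mem hh hωu)]
  · rw [hg ω hωs, hh ω hωu, hg ω hωs]

open scoped Classical in
/-- The restriction of a permutation to a set it preserves, extended by the identity. -/
noncomputable def restrictPerm (g : Equiv.Perm ℕ) (s : Set ℕ)
    (h1 : ∀ ω ∈ s, g ω ∈ s) (h2 : ∀ ω ∈ s, g⁻¹ ω ∈ s) : Equiv.Perm ℕ where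
  toFun ω := if ω ∈ s then g ω else ω
  invFun ω := if ω ∈ s then g⁻¹ ω else ω
  left_inv ω := by
    by_cases h : ω ∈ s
    · simp [h, h1 ω h]
    · simp [h]
  right_inv ω := by
    by_cases h : ω ∈ s
    · simp [h, show g.symm ω ∈ s from h2 ω h]
    · simp [h]

open scoped Classical in
lemma restrictPerm_apply (g : Equiv.Perm ℕ) (s : Set ℕ)
    (h1 : ∀ ω ∈ s, g ω ∈ s) (h2 : ∀ ω ∈ s, g⁻¹ ω ∈ s) (ω : ℕ) :
    restrictPerm g s h1 h2 ω = if ω ∈ s then g ω else ω := rfl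

/-- Let the finite set `α` be partitioned into nonempty subsets `α₁, …, α_t`, and
for each `i` let `Hᵢ ≤ Sym(αᵢ) ≤ Sym(α)` be a subgroup fixing no element of `αᵢ`.
Then `C_{Sym(α)}(H₁ × ⋯ × H_t) = C_{Sym(α₁)}(H₁) × ⋯ × C_{Sym(α_t)}(H_t)`
(internal products of subgroups with pairwise disjoint supports are rendered as
joins of subgroups). -/
theorem stmt_1 (α : Set ℕ) (hα : α.Finite) (t : ℕ)
    (A : Fin t → Set ℕ) (hne : ∀ i, (A i).Nonempty)
    (hdisj : ∀ i j, i ≠ j → Disjoint (A i) (A j))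
    (hcover : (⋃ i, A i) = α)
    (H : Fin t → Subgroup (Equiv.Perm ℕ))
    (hH : ∀ i, H i ≤ symOn (A i))
    (hnofix : ∀ i, ∀ ω ∈ A i, ∃ h ∈ H i, h ω ≠ ω) :
    symOn α ⊓ Subgroup.centralizer ((⨆ i, H i : Subgroup (Equiv.Perm ℕ)) :
        Set (Equiv.Perm ℕ)) =
      ⨆ i, (symOn (A i) ⊓ Subgroup.centralizer ((H i : Subgroup (Equiv.Perm ℕ)) :
        Set (Equiv.Perm ℕ))) := by
  classical
  apply le_antisymm
  · -- hard direction
    intro g hg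
    obtain ⟨hgα, hgc⟩ := Subgroup.mem_inf.mp hg
    rw [Subgroup.mem_centralizer_iff] at hgc
    have hcomm : ∀ i, ∀ h ∈ H i, h * g = g * h := fun i h hh =>
      hgc h (Subgroup.mem_iSup_of_mem i hh)
    -- g and g⁻¹ preserve each A i
    have key : ∀ (f : Equiv.Perm ℕ), (∀ i, ∀ h ∈ H i, h * f = f * h) →
        ∀ i, ∀ ω ∈ A i, f ω ∈ A i := by
      intro f hf i ω hω
      obtain ⟨h, hh, hne⟩ := hnofix i ω hω
      by_contra hc
      have h1 : h (f ω) = f ω := hH i hh _ hc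
      have h2 : h (f ω) = f (h ω) := by
        have e := hf i h hh
        calc h (f ω) = (h * f) ω := rfl
          _ = (f * h) ω := by rw [e]
          _ = f (h ω) := rfl
      exact hne (f.injective (h2.symm.trans h1))
    have hg1 : ∀ i, ∀ ω ∈ A i, g ω ∈ A i := key g hcomm
    have hg2 : ∀ i, ∀ ω ∈ A i, g⁻¹ ω ∈ A i := by
      refine key g⁻¹ (fun i h hh => ?_)
      have : Commute h g := hcomm i h hh
      exact this.inv_right.eq
    set gg : Fin t → Equiv.Perm ℕ := fun i => restrictPerm g (A i) (hg1 i) (hg2 i) with hgg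
    have gg_apply : ∀ i ω, gg i ω = if ω ∈ A i then g ω else ω := fun i ω => rfl
    have ggs : ∀ i, gg i ∈ symOn (A i) := by
      intro i ω hω
      rw [gg_apply, if_neg hω]
    have ggc : ∀ i, gg i ∈ Subgroup.centralizer ((H i : Subgroup (Equiv.Perm ℕ)) :
        Set (Equiv.Perm ℕ)) := by
      intro i
      rw [Subgroup.mem_centralizer_iff]
      intro h hh
      apply Equiv.ext
      intro ω
      show h (gg i ω) = gg i (h ω)
      by_cases hω : ω ∈ A i
      · have hhω : h ω ∈ A i := symOn_apply_mem (hH i hh) hω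
        rw [gg_apply, gg_apply, if_pos hω, if_pos hhω]
        have e := hcomm i h hh
        calc h (g ω) = (h * g) ω := rfl
          _ = (g * h) ω := by rw [e]
          _ = g (h ω) := rfl
      · have hfix : h ω = ω := hH i hh ω hω
        rw [gg_apply, gg_apply, if_neg hω, hfix, if_neg hω]
    -- g is the product of the gg i
    have hprod : ∀ l : List (Fin t), l.Nodup → ∀ ω : ℕ,
        ((l.map gg).prod) ω = if ∃ j ∈ l, ω ∈ A j then g ω else ω := by
      intro l
      induction l with
      | nil => intro _ ω; simp
      | cons a l ih =>
        intro hnd ω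
        obtain ⟨ha, hnd'⟩ := List.nodup_cons.mp hnd
        have step : ((a :: l).map gg).prod ω = gg a ((l.map gg).prod ω) := rfl
        rw [step, ih hnd' ω]
        by_cases hc : ∃ j ∈ l, ω ∈ A j
        · rw [if_pos hc]
          obtain ⟨j, hj, hωj⟩ := hc
          have hja : j ≠ a := by rintro rfl; exact ha hj
          have hmem : g ω ∈ A j := hg1 j ω hωj
          have hgna : g ω ∉ A a := fun h => (hdisj j a hja).le_bot ⟨hmem, h⟩
          rw [gg_apply, if_neg hgna,
            if_pos (⟨j, List.mem_cons_of_mem a hj, hωj⟩ : ∃ j ∈ a :: l, ω ∈ A j)]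
        · rw [if_neg hc]
          by_cases hωa : ω ∈ A a
          · rw [gg_apply, if_pos hωa,
              if_pos (⟨a, List.mem_cons_self, hωa⟩ : ∃ j ∈ a :: l, ω ∈ A j)]
          · rw [gg_apply, if_neg hωa, if_neg]
            rintro ⟨j, hj, hωj⟩
            rcases List.mem_cons.mp hj with rfl | hj'
            · exact hωa hωj
            · exact hc ⟨j, hj', hωj⟩
    have hgeq : g = (List.ofFn gg).prod := by
      apply Equiv.ext
      intro ω
      rw [List.ofFn_eq_map, hprod _ (List.nodup_finRange t) ω]
      by_cases hω : ω ∈ α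
      · rw [if_pos]
        obtain ⟨j, hj⟩ := Set.mem_iUnion.mp (hcover ▸ hω : ω ∈ ⋃ i, A i)
        exact ⟨j, List.mem_finRange j, hj⟩
      · rw [if_neg, hgα ω hω]
        rintro ⟨j, _, hωj⟩
        exact hω (hcover ▸ Set.mem_iUnion.mpr ⟨j, hωj⟩)
    rw [hgeq]
    refine Subgroup.list_prod_mem _ ?_
    intro x hx
    obtain ⟨i, rfl⟩ := List.mem_ofFn.mp hx
    exact Subgroup.mem_iSup_of_mem i (Subgroup.mem_inf.mpr ⟨ggs i, ggc i⟩)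
  · refine iSup_le fun i => le_inf ?_ ?_
    · exact le_trans inf_le_left (symOn_mono (hcover ▸ Set.subset_iUnion A i))
    · intro x hx
      obtain ⟨hx1, hx2⟩ := Subgroup.mem_inf.mp hx
      rw [Subgroup.mem_centralizer_iff]
      intro y hy
      have hy' : y ∈ ⨆ j, H j := hy
      have hcxy : Commute x y := by
        refine Subgroup.iSup_induction (C := fun w => Commute x w) H hy' (fun j z hz => ?_)
          (Commute.one_right x) (fun a b ha hb => ha.mul_right hb)
        by_cases hji : j = i
        · subst hji
          exact (Subgroup.mem_centralizer_iff.mp hx2 z hz).symm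
        · exact symOn_commute (hdisj i j (Ne.symm hji)) hx1 (hH j hz)
      exact hcxy.symm.eq

end FPS
end

section
/- Let Y ∈ 𝓢^q be irreducible and closed. Then Y is exact or Y is projective. -/
open Equiv Pointwise

namespace FPS

lemma mem_ssupp {X : Set (Equiv.Perm ℕ)} {ω : ℕ} :
    ω ∈ ssupp X ↔ ∃ ρ ∈ X, ρ ω ≠ ω := by
  simp [ssupp, psupp]

lemma apply_mem_psupp_iff {ρ : Equiv.Perm ℕ} {ω : ℕ} : ρ ω ∈ psupp ρ ↔ ω ∈ psupp ρ := by
  simp only [psupp, Set.mem_setOf_eq]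
  constructor
  · intro h hc; exact h (congrArg ρ hc)
  · intro h hc; exact h (ρ.injective hc)

open Classical in
noncomputable def restr (A : Set ℕ) (ρ : Equiv.Perm ℕ) : Equiv.Perm ℕ :=
  if h : ∀ ω, ω ∈ A ↔ ρ ω ∈ A then Equiv.Perm.ofSubtype (ρ.subtypePerm fun ω => (h ω).symm) else 1

lemma restr_apply_mem {A : Set ℕ} {ρ : Equiv.Perm ℕ} (h : ∀ ω, ω ∈ A ↔ ρ ω ∈ A)
    {ω : ℕ} (hω : ω ∈ A) : restr A ρ ω = ρ ω := by
  classical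
  rw [restr, dif_pos h, Equiv.Perm.ofSubtype_apply_of_mem _ hω, Equiv.Perm.subtypePerm_apply]

lemma restr_apply_not_mem {A : Set ℕ} {ρ : Equiv.Perm ℕ} {ω : ℕ} (hω : ω ∉ A) :
    restr A ρ ω = ω := by
  classical
  rw [restr]
  split_ifs with h
  · exact Equiv.Perm.ofSubtype_apply_of_not_mem _ hω
  · rfl

lemma zpow_eq_on {ρ τ : Equiv.Perm ℕ} {A : Set ℕ}
    (hA : ∀ ω, ω ∈ A ↔ ρ ω ∈ A) (hagree : ∀ ω ∈ A, τ ω = ρ ω) (n : ℤ) :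
    ∀ ω ∈ A, (τ ^ n) ω = (ρ ^ n) ω ∧ (ρ ^ n) ω ∈ A := by
  have hinv : ∀ ω ∈ A, τ⁻¹ ω = ρ⁻¹ ω ∧ ρ⁻¹ ω ∈ A := by
    intro ω hω
    have h1 : ρ⁻¹ ω ∈ A := by
      rw [hA (ρ⁻¹ ω), show ρ (ρ⁻¹ ω) = ω from Equiv.apply_symm_apply ρ ω]; exact hω
    refine ⟨?_, h1⟩
    have h2 : τ (ρ⁻¹ ω) = ω := by rw [hagree _ h1, show ρ (ρ⁻¹ ω) = ω from Equiv.apply_symm_apply ρ ω]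
    calc τ⁻¹ ω = τ⁻¹ (τ (ρ⁻¹ ω)) := by rw [h2]
    _ = ρ⁻¹ ω := Equiv.symm_apply_apply _ _
  induction n using Int.induction_on with
  | zero => simp
  | succ n ih =>
    intro ω hω
    have h1 : ρ ω ∈ A := (hA ω).mp hω
    have h2 := ih (ρ ω) h1
    have e : ∀ σ : Equiv.Perm ℕ, σ ^ ((n : ℤ) + 1) = σ ^ (n : ℤ) * σ := fun σ => zpow_add_one σ n
    rw [e τ, e ρ, Equiv.Perm.mul_apply, Equiv.Perm.mul_apply, hagree ω hω]
    exact h2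
  | pred n ih =>
    intro ω hω
    have h1 := hinv ω hω
    have h2 := ih (ρ⁻¹ ω) h1.2
    have e : ∀ σ : Equiv.Perm ℕ, σ ^ ((-n : ℤ) - 1) = σ ^ (-n : ℤ) * σ⁻¹ := fun σ =>
      zpow_sub_one σ (-n)
    rw [e τ, e ρ, Equiv.Perm.mul_apply, Equiv.Perm.mul_apply, h1.1]
    exact h2

lemma cycleType_facts {α : Type*} [Fintype α] [DecidableEq α] {q : ℕ} {τ : Equiv.Perm α}
    (hfix : ∀ a, τ a ≠ a) (ho : ∀ a, (Set.range fun n : ℤ => (τ ^ n) a).ncard = q) :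
    (∀ n ∈ τ.cycleType, n = q) ∧ τ.cycleType.sum = Fintype.card α := by
  constructor
  · intro n hn
    rw [Equiv.Perm.cycleType_def, Multiset.mem_map] at hn
    obtain ⟨c, hc, rfl⟩ := hn
    have hc' : c ∈ τ.cycleFactorsFinset := hc
    have hcyc := (Equiv.Perm.mem_cycleFactorsFinset_iff.mp hc').1
    obtain ⟨a, ha⟩ : c.support.Nonempty := by
      rw [Finset.nonempty_iff_ne_empty, ne_eq, Equiv.Perm.support_eq_empty_iff]
      exact hcyc.ne_one
    have hceq : c = τ.cycleOf a := Equiv.Perm.cycle_is_cycleOf ha hc'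
    have haτ : a ∈ τ.support := Equiv.Perm.mem_support.mpr (hfix a)
    have hsup : ((τ.cycleOf a).support : Set α) = Set.range fun n : ℤ => (τ ^ n) a := by
      ext b
      rw [Finset.mem_coe, Equiv.Perm.mem_support_cycleOf_iff]
      constructor
      · rintro ⟨⟨i, hi⟩, -⟩; exact ⟨i, hi⟩
      · rintro ⟨i, hi⟩; exact ⟨⟨i, hi⟩, haτ⟩
    show c.support.card = q
    calc c.support.card = ((τ.cycleOf a).support : Set α).ncard := by
          rw [hceq, Set.ncard_coe_finset]
    _ = q := by rw [hsup, ho a]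
  · rw [Equiv.Perm.sum_cycleType]
    have : τ.support = Finset.univ :=
      Finset.eq_univ_iff_forall.mpr fun a => Equiv.Perm.mem_support.mpr (hfix a)
    rw [this, Finset.card_univ]


lemma conj_exists {q : ℕ} (hq : 2 ≤ q) {S : Set ℕ} (hS : S.Finite)
    {ρ π : Equiv.Perm ℕ} (hρ : psupp ρ = S) (hπ : psupp π = S)
    (hρo : ∀ ω ∈ S, (Set.range fun n : ℤ => (ρ ^ n) ω).ncard = q)
    (hπo : ∀ ω ∈ S, (Set.range fun n : ℤ => (π ^ n) ω).ncard = q) :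
    ∃ g ∈ (symOn S : Set (Equiv.Perm ℕ)), g⁻¹ * ρ * g = π := by
  classical
  letI : Fintype S := hS.fintype
  have hρS : ∀ ω, ω ∈ S ↔ ρ ω ∈ S := by
    intro ω; rw [← hρ]; exact apply_mem_psupp_iff.symm
  have hπS : ∀ ω, ω ∈ S ↔ π ω ∈ S := by
    intro ω; rw [← hπ]; exact apply_mem_psupp_iff.symm
  set ρ' := ρ.subtypePerm fun ω => (hρS ω).symm with hρ'def
  set π' := π.subtypePerm fun ω => (hπS ω).symm with hπ'def
  have key_orb : ∀ (τ : Equiv.Perm ℕ) (hτS : ∀ ω, ω ∈ S ↔ τ ω ∈ S)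
      (_ : ∀ ω ∈ S, (Set.range fun n : ℤ => (τ ^ n) ω).ncard = q) (a : S),
      (Set.range fun n : ℤ => ((τ.subtypePerm fun ω => (hτS ω).symm) ^ n) a).ncard = q := by
    intro τ hτS hτo a
    have himg : Subtype.val '' (Set.range fun n : ℤ => ((τ.subtypePerm fun ω => (hτS ω).symm) ^ n) a)
        = Set.range fun n : ℤ => (τ ^ n) (a : ℕ) := by
      rw [← Set.range_comp]
      apply congrArg
      funext n
      simp only [Function.comp_apply, Equiv.Perm.subtypePerm_zpow,
        Equiv.Perm.subtypePerm_apply]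
    have := congrArg Set.ncard himg
    rw [Set.ncard_image_of_injective _ Subtype.val_injective] at this
    rw [this]
    exact hτo _ a.2
  have hρfix : ∀ a : S, ρ' a ≠ a := by
    intro a h
    have h2 : ρ (a : ℕ) = a := congrArg Subtype.val h
    have : (a : ℕ) ∈ psupp ρ := by rw [hρ]; exact a.2
    exact this h2
  have hπfix : ∀ a : S, π' a ≠ a := by
    intro a h
    have h2 : π (a : ℕ) = a := congrArg Subtype.val h
    have : (a : ℕ) ∈ psupp π := by rw [hπ]; exact a.2
    exact this h2
  have f1 := cycleType_facts hρfix (key_orb ρ hρS hρo)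
  have f2 := cycleType_facts hπfix (key_orb π hπS hπo)
  have e1 : ρ'.cycleType = Multiset.replicate (Multiset.card ρ'.cycleType) q :=
    (Multiset.eq_replicate_card).mpr f1.1
  have e2 : π'.cycleType = Multiset.replicate (Multiset.card π'.cycleType) q :=
    (Multiset.eq_replicate_card).mpr f2.1
  have hcard : Multiset.card ρ'.cycleType = Multiset.card π'.cycleType := by
    have s1 : Multiset.card ρ'.cycleType * q = Fintype.card S := by
      rw [← f1.2]; nth_rewrite 2 [e1]; rw [Multiset.sum_replicate, smul_eq_mul]
    have s2 : Multiset.card π'.cycleType * q = Fintype.card S := by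
      rw [← f2.2]; nth_rewrite 2 [e2]; rw [Multiset.sum_replicate, smul_eq_mul]
    have hq0 : 0 < q := by omega
    exact Nat.eq_of_mul_eq_mul_right hq0 (s1.trans s2.symm)
  have hct : ρ'.cycleType = π'.cycleType := by rw [e1, e2, hcard]
  have hconj : IsConj ρ' π' := Equiv.Perm.isConj_iff_cycleType_eq.mpr hct
  rw [isConj_iff] at hconj
  obtain ⟨c, hc⟩ := hconj
  refine ⟨Equiv.Perm.ofSubtype c⁻¹, ?_, ?_⟩
  · intro ω hω
    exact Equiv.Perm.ofSubtype_apply_of_not_mem _ hω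
  · have hginv : (Equiv.Perm.ofSubtype c⁻¹)⁻¹ = Equiv.Perm.ofSubtype c := by
      rw [map_inv, inv_inv]
    ext ω
    rw [Equiv.Perm.mul_apply, Equiv.Perm.mul_apply, hginv]
    by_cases hω : ω ∈ S
    · have h1 : Equiv.Perm.ofSubtype c⁻¹ ω = ((c⁻¹ ⟨ω, hω⟩ : S) : ℕ) :=
        Equiv.Perm.ofSubtype_apply_of_mem _ hω
      rw [h1]
      set a : S := c⁻¹ ⟨ω, hω⟩ with ha
      have h2 : ρ (a : ℕ) = ((ρ' a : S) : ℕ) := rfl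
      rw [h2]
      have h3 : Equiv.Perm.ofSubtype c ((ρ' a : S) : ℕ) = ((c (ρ' a) : S) : ℕ) :=
        Equiv.Perm.ofSubtype_apply_of_mem _ _
      rw [h3]
      have h4 : c (ρ' a) = π' ⟨ω, hω⟩ := by
        have := congrFun (congrArg (fun f : Equiv.Perm S => (f : S → S)) hc) ⟨ω, hω⟩
        simpa [ha, Equiv.Perm.mul_apply] using this
      rw [h4]
      rfl
    · have h1 : Equiv.Perm.ofSubtype c⁻¹ ω = ω := Equiv.Perm.ofSubtype_apply_of_not_mem _ hω
      have h2 : ρ ω = ω := by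
        by_contra h
        exact hω (hρ ▸ h)
      have h3 : Equiv.Perm.ofSubtype c ω = ω := Equiv.Perm.ofSubtype_apply_of_not_mem _ hω
      have h4 : π ω = ω := by
        by_contra h
        exact hω (hπ ▸ h)
      rw [h1, h2, h3, h4]


lemma key {p q : ℕ} (hq : 2 ≤ q) {Y : Set (Equiv.Perm ℕ)}
    (hY : memS q Y) (hirr : IsIrred Y) (hclosed : IsClosedSet p Y)
    {Q : Subgroup (Equiv.Perm ℕ)} (hQ : IsSylowOf p Q (SX Y)) (hQne : Q ≠ ⊥) :
    ssupp (Q : Set (Equiv.Perm ℕ)) = ssupp Y := by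
  classical
  obtain ⟨⟨hfin, hne', hY1, hsupfin⟩, hfull, horb⟩ := hY
  by_contra hne
  set S := ssupp Y with hSdef
  set A := ssupp (Q : Set (Equiv.Perm ℕ)) with hAdef
  set B := S \ A with hBdef
  have hSfin : S.Finite := Set.Finite.biUnion hfin hsupfin
  have hQle := hQ.1
  have hQsym : ∀ g ∈ Q, ∀ ω, ω ∉ S → g ω = ω := by
    intro g hg
    exact (Subgroup.mem_inf.mp (hQle hg)).1
  have hcomm : ∀ g ∈ Q, ∀ ρ ∈ Y, ∀ ω : ℕ, g (ρ ω) = ρ (g ω) := by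
    intro g hg ρ hρ ω
    have h1 : ρ * g = g * ρ :=
      Subgroup.mem_centralizer_iff.mp (Subgroup.mem_inf.mp (hQle hg)).2 ρ hρ
    have h2 := congrArg (fun f : Equiv.Perm ℕ => f ω) h1
    simpa [Equiv.Perm.mul_apply] using h2.symm
  have hpsuppQ : ∀ g ∈ Q, ∀ ω, g ω ≠ ω → ω ∈ A := by
    intro g hg ω hω
    exact mem_ssupp.mpr ⟨g, hg, hω⟩
  have hAS : A ⊆ S := by
    intro ω hω
    obtain ⟨g, hg, hgω⟩ := mem_ssupp.mp hω
    by_contra h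
    exact hgω (hQsym g hg ω h)
  have hAne : A.Nonempty := by
    obtain ⟨g, hg, hgne⟩ : ∃ g ∈ Q, g ≠ (1 : Equiv.Perm ℕ) := by
      by_contra h
      push_neg at h
      exact hQne ((Subgroup.eq_bot_iff_forall Q).mpr h)
    have hex : ∃ ω, g ω ≠ ω := by
      by_contra h
      push_neg at h
      exact hgne (Equiv.ext h)
    obtain ⟨ω, hω⟩ := hex
    exact ⟨ω, mem_ssupp.mpr ⟨g, hg, hω⟩⟩
  have hBne : B.Nonempty := by
    rw [hBdef, Set.diff_nonempty]
    intro h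
    exact hne (Set.Subset.antisymm hAS h)
  have hAinv : ∀ ρ ∈ Y, ∀ ω, ω ∈ A ↔ ρ ω ∈ A := by
    intro ρ hρ ω
    constructor
    · intro hω
      obtain ⟨g, hg, hgω⟩ := mem_ssupp.mp hω
      refine mem_ssupp.mpr ⟨g, hg, ?_⟩
      intro hc
      rw [hcomm g hg ρ hρ ω] at hc
      exact hgω (ρ.injective hc)
    · intro hω
      obtain ⟨g, hg, hgω⟩ := mem_ssupp.mp hω
      refine mem_ssupp.mpr ⟨g, hg, ?_⟩
      intro hc
      apply hgω
      rw [hcomm g hg ρ hρ ω, hc]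
  have hSinv : ∀ ρ ∈ Y, ∀ ω, ω ∈ S ↔ ρ ω ∈ S := by
    intro ρ hρ ω
    rw [← hfull ρ hρ]
    exact apply_mem_psupp_iff.symm
  have hBinv : ∀ ρ ∈ Y, ∀ ω, ω ∈ B ↔ ρ ω ∈ B := by
    intro ρ hρ ω
    rw [hBdef, Set.mem_diff, Set.mem_diff, hSinv ρ hρ ω, hAinv ρ hρ ω]
  have hmoves : ∀ ρ ∈ Y, ∀ ω ∈ S, ρ ω ≠ ω := by
    intro ρ hρ ω hω
    rw [← hfull ρ hρ] at hω
    exact hω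
  have hfixout : ∀ ρ ∈ Y, ∀ ω, ω ∉ S → ρ ω = ω := by
    intro ρ hρ ω hω
    by_contra h
    exact hω (by rw [← hfull ρ hρ]; exact h)
  have hdecomp : ∀ ρ ∈ Y, restr A ρ * restr B ρ = ρ := by
    intro ρ hρ
    ext ω
    rw [Equiv.Perm.mul_apply]
    by_cases hω : ω ∈ B
    · rw [restr_apply_mem (hBinv ρ hρ) hω,
        restr_apply_not_mem (((hBinv ρ hρ ω).mp hω).2)]
    · rw [restr_apply_not_mem hω]
      by_cases hω2 : ω ∈ A
      · exact restr_apply_mem (hAinv ρ hρ) hω2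
      · rw [restr_apply_not_mem hω2]
        have hωS : ω ∉ S := fun h => hω ⟨h, hω2⟩
        exact (hfixout ρ hρ ω hωS).symm
  have hpsupp_restr : ∀ C : Set ℕ, C ⊆ S → ∀ ρ ∈ Y, (∀ ω, ω ∈ C ↔ ρ ω ∈ C) →
      psupp (restr C ρ) = C := by
    intro C hCS ρ hρ hCinv
    ext ω
    simp only [psupp, Set.mem_setOf_eq]
    by_cases hω : ω ∈ C
    · rw [restr_apply_mem hCinv hω]
      exact iff_of_true (hmoves ρ hρ ω (hCS hω)) hω
    · rw [restr_apply_not_mem hω]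
      exact iff_of_false (fun h => h rfl) hω
  have hcross : ∀ ρ ∈ Y, ∀ σ ∈ Y, restr A ρ * restr B σ ∈ Y := by
    intro ρ hρ σ hσ
    set π := restr A ρ * restr B σ with hπdef
    have hπA : ∀ ω ∈ A, π ω = ρ ω := by
      intro ω hω
      rw [hπdef, Equiv.Perm.mul_apply, restr_apply_not_mem (fun h : ω ∈ B => h.2 hω),
        restr_apply_mem (hAinv ρ hρ) hω]
    have hπB : ∀ ω ∈ B, π ω = σ ω := by
      intro ω hω
      rw [hπdef, Equiv.Perm.mul_apply, restr_apply_mem (hBinv σ hσ) hω,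
        restr_apply_not_mem (((hBinv σ hσ ω).mp hω).2)]
    have hπout : ∀ ω, ω ∉ S → π ω = ω := by
      intro ω hω
      rw [hπdef, Equiv.Perm.mul_apply, restr_apply_not_mem (fun h : ω ∈ B => hω h.1),
        restr_apply_not_mem (fun h : ω ∈ A => hω (hAS h))]
    have hπsupp : psupp π = S := by
      ext ω
      simp only [psupp, Set.mem_setOf_eq]
      by_cases hω : ω ∈ S
      · refine iff_of_true ?_ hω
        by_cases hω2 : ω ∈ A
        · rw [hπA ω hω2]; exact hmoves ρ hρ ω hω
        · rw [hπB ω ⟨hω, hω2⟩]; exact hmoves σ hσ ω hω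
      · exact iff_of_false (fun h => h (hπout ω hω)) hω
    have hπorb : ∀ ω ∈ S, (Set.range fun n : ℤ => (π ^ n) ω).ncard = q := by
      intro ω hω
      by_cases hω2 : ω ∈ A
      · have hz := zpow_eq_on (hAinv ρ hρ) hπA
        have he : (Set.range fun n : ℤ => (π ^ n) ω) = Set.range fun n : ℤ => (ρ ^ n) ω := by
          ext b
          constructor
          · rintro ⟨n, rfl⟩; exact ⟨n, ((hz n ω hω2).1).symm⟩
          · rintro ⟨n, rfl⟩; exact ⟨n, (hz n ω hω2).1⟩
        rw [he]
        exact horb ρ hρ ω (by rw [hfull ρ hρ]; exact hω)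
      · have hωB : ω ∈ B := ⟨hω, hω2⟩
        have hz := zpow_eq_on (hBinv σ hσ) hπB
        have he : (Set.range fun n : ℤ => (π ^ n) ω) = Set.range fun n : ℤ => (σ ^ n) ω := by
          ext b
          constructor
          · rintro ⟨n, rfl⟩; exact ⟨n, ((hz n ω hωB).1).symm⟩
          · rintro ⟨n, rfl⟩; exact ⟨n, (hz n ω hωB).1⟩
        rw [he]
        exact horb σ hσ ω (by rw [hfull σ hσ]; exact hω)
    have hρorb : ∀ ω ∈ S, (Set.range fun n : ℤ => (ρ ^ n) ω).ncard = q := by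
      intro ω hω
      exact horb ρ hρ ω (by rw [hfull ρ hρ]; exact hω)
    obtain ⟨g, hg, hgρ⟩ := conj_exists hq hSfin (hfull ρ hρ) hπsupp hρorb hπorb
    have hπXi : π ∈ Xi Y := by
      refine Set.mem_iUnion₂.mpr ⟨g, hg, ?_⟩
      exact ⟨ρ, hρ, hgρ⟩
    have hπcent : π ∈ Subgroup.centralizer (Q : Set (Equiv.Perm ℕ)) := by
      rw [Subgroup.mem_centralizer_iff]
      intro g' hg'
      ext ω
      show g' (π ω) = π (g' ω)
      have hg'mem : ∀ ω', ω' ∈ A → g' ω' ∈ A := by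
        intro ω' h
        by_cases hc : g' (g' ω') = g' ω'
        · rw [g'.injective hc]; exact h
        · exact hpsuppQ g' hg' _ hc
      by_cases hω : ω ∈ A
      · rw [hπA ω hω, hπA _ (hg'mem ω hω)]
        exact hcomm g' hg' ρ hρ ω
      · have hg'ω : g' ω = ω := by
          by_contra hc
          exact hω (hpsuppQ g' hg' ω hc)
        rw [hg'ω]
        have hπωA : π ω ∉ A := by
          by_cases hωS : ω ∈ S
          · have hωB : ω ∈ B := ⟨hωS, hω⟩
            rw [hπB ω hωB]
            exact ((hBinv σ hσ ω).mp hωB).2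
          · rw [hπout ω hωS]; exact hω
        by_contra hc
        exact hπωA (hpsuppQ g' hg' _ hc)
    have hmem : π ∈ (Subgroup.centralizer (Q : Set (Equiv.Perm ℕ)) :
        Set (Equiv.Perm ℕ)) ∩ Xi Y := ⟨hπcent, hπXi⟩
    rw [hclosed Q hQ] at hmem
    exact hmem
  have hmul : Y = (restr A '' Y) * (restr B '' Y) := by
    ext τ
    rw [Set.mem_mul]
    constructor
    · intro hτ
      exact ⟨restr A τ, ⟨τ, hτ, rfl⟩, restr B τ, ⟨τ, hτ, rfl⟩, hdecomp τ hτ⟩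
    · rintro ⟨x, ⟨ρ, hρ, rfl⟩, y, ⟨σ, hσ, rfl⟩, rfl⟩
      exact hcross ρ hρ σ hσ
  have hmemF : ∀ C : Set ℕ, C ⊆ S → C.Nonempty → (∀ ρ ∈ Y, ∀ ω, ω ∈ C ↔ ρ ω ∈ C) →
      memF (restr C '' Y) := by
    intro C hCS hCne hCinv
    refine ⟨hfin.image _, hne'.image _, ?_, ?_⟩
    · obtain ⟨ρ, hρ⟩ := hne'
      intro hc
      have h1 : restr C ρ ∈ restr C '' Y := ⟨ρ, hρ, rfl⟩
      rw [hc, Set.mem_singleton_iff] at h1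
      obtain ⟨ω, hω⟩ := hCne
      have h2 := hmoves ρ hρ ω (hCS hω)
      rw [← restr_apply_mem (hCinv ρ hρ) hω, h1] at h2
      exact h2 rfl
    · rintro τ ⟨ρ, hρ, rfl⟩
      rw [hpsupp_restr C hCS ρ hρ (hCinv ρ hρ)]
      exact hSfin.subset hCS
  have hss : ∀ C : Set ℕ, C ⊆ S → (∀ ρ ∈ Y, ∀ ω, ω ∈ C ↔ ρ ω ∈ C) →
      ssupp (restr C '' Y) ⊆ C := by
    intro C hCS hCinv ω hω
    obtain ⟨τ, ⟨ρ, hρ, rfl⟩, hτω⟩ := mem_ssupp.mp hω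
    rw [← hpsupp_restr C hCS ρ hρ (hCinv ρ hρ)]
    exact hτω
  have hdisj : Disjoint (ssupp (restr A '' Y)) (ssupp (restr B '' Y)) :=
    Set.disjoint_of_subset (hss A hAS hAinv) (hss B Set.diff_subset hBinv)
      Set.disjoint_sdiff_right
  exact hirr.2 _ _ (hmemF A hAS hAne hAinv) (hmemF B Set.diff_subset hBne hBinv) hdisj hmul

/-- If `Y ∈ 𝓢^q` is irreducible and closed, then `Y` is exact or `Y` is projective. -/
theorem stmt_4 (p q : ℕ) (hp : p.Prime) (hq : 2 ≤ q) (Y : Set (Equiv.Perm ℕ))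
    (hY : memS q Y) (hirr : IsIrred Y) (hclosed : IsClosedSet p Y) :
    IsExactSet p Y ∨ IsProjectiveSet p Y := by
  by_cases h : ∃ Q : Subgroup (Equiv.Perm ℕ), IsSylowOf p Q (SX Y) ∧ Q = ⊥
  · right
    intro Q hQ
    obtain ⟨Q0, hQ0, rfl⟩ := h
    exact hQ0.2.2 Q hQ.1 hQ.2.1 bot_le
  · left
    intro Q hQ
    push_neg at h
    exact key hq hY hirr hclosed hQ (h Q hQ)

end FPS
end
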